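/- Let F be a field, let K be an F-representable matroid, and let X be a subset of the ground set of K. Then there exists an F-representable matroid N whose ground set is the set of circuits of K/X, such that N satisfies the lift condition for K/X and (K/X)^N = K∖X. -/

import Mathlib

/-!
Represent `K` by `φ : α → W` and put `U = span (φ '' X)`. Then `K ／ X` is represented by `φ`
followed by the quotient map `W → W ⧸ U`. For every circuit `C` of `K ／ X` choose a linear
dependency `c C` of these quotient vectors with support exactly `C`; read in `W` it gives a vector
`ψ C ∈ U`, and `N` is the matroid on the circuits represented by `ψ`.

Cancelling one support element at a time against a circuit shows that the `c C` with `C ⊆ Y` span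
all dependencies supported on `Y`. Hence the `ψ C` with `C ⊆ Y` span `span (φ '' Y) ⊓ U`, and the
rank formula is rank–nullity for `span (φ '' Y) → W ⧸ U`. If `C₁ ∪ C₂` has nullity two, its space
of dependencies is two-dimensional, hence spanned by `c C₁` and `c C₂`; so for every circuit
`C ⊆ C₁ ∪ C₂` the vector `c C`, and with it `ψ C`, lies in their span.
-/

open Set Matroid
open scoped Matroid

namespace PaperLift

variable {α : Type} {β : Type}

/-- A circuit of a matroid: a minimal dependent set. -/
def Circuit (M : Matroid α) (C : Set α) : Prop :=
  M.Dep C ∧ ∀ D, D ⊂ C → M.Indep D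

/-- The rank of a set in a matroid: the supremum of cardinalities of independent subsets. -/
noncomputable def rk (M : Matroid α) (X : Set α) : ℕ :=
  sSup {n | ∃ I, M.Indep I ∧ I ⊆ X ∧ I.ncard = n}

/-- The rank of a matroid. -/
noncomputable def rank (M : Matroid α) : ℕ := rk M M.E

/-- Deletion of a set from a matroid. -/
def delete (M : Matroid α) (D : Set α) : Matroid α := M ↾ (M.E \ D)

/-- Contraction of a set in a matroid, defined by duality. -/
noncomputable def contract (M : Matroid α) (C : Set α) : Matroid α := ((M✶) ↾ (M.E \ C))✶

/-- A hyperplane: a maximal proper flat. -/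
def Hyperplane (M : Matroid α) (H : Set α) : Prop :=
  M.IsFlat H ∧ H ≠ M.E ∧ ∀ F, M.IsFlat F → H ⊂ F → F = M.E

/-- A circuit-hyperplane: a circuit that is also a hyperplane. -/
def CircuitHyperplane (M : Matroid α) (C : Set α) : Prop :=
  Circuit M C ∧ Hyperplane M C

/-- `L` is a lift of `M`: there is a matroid `K` on a ground set `E ∪ F`, with `F` disjoint
from `E = M.E`, such that `M = K / F` and `L = K \ F` (up to the canonical embedding). -/
def IsLiftOf (L M : Matroid α) : Prop :=
  L.E = M.E ∧ ∃ (β : Type) (K : Matroid (α ⊕ β)) (F : Set (α ⊕ β)),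
    Disjoint (Sum.inl '' M.E) F ∧ K.E = Sum.inl '' M.E ∪ F ∧
    contract K F = M.map Sum.inl Sum.inl_injective.injOn ∧
    delete K F = L.map Sum.inl Sum.inl_injective.injOn

/-- `N`, a matroid whose ground set is the set of circuits of `M`, satisfies the lift
condition for `M`. -/
def LiftCondition (M : Matroid α) (N : Matroid (Set α)) : Prop :=
  N.E = {C | Circuit M C} ∧
  ∀ C₁ C₂, Circuit M C₁ → Circuit M C₂ →
    (C₁ ∪ C₂).ncard = rk M (C₁ ∪ C₂) + 2 →
    ∀ C, Circuit M C → C ⊆ C₁ ∪ C₂ → C ∈ N.closure {C₁, C₂}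

/-- `L` has the rank function of the lift `M^N` of `M` constructed from `N`. -/
def IsLiftMatroid (M : Matroid α) (N : Matroid (Set α)) (L : Matroid α) : Prop :=
  L.E = M.E ∧ ∀ X ⊆ M.E, rk L X = rk M X + rk N {C | Circuit M C ∧ C ⊆ X}

/-- Matroid isomorphism: a bijection between ground sets preserving independence
in both directions. -/
def Iso (M : Matroid α) (N : Matroid β) : Prop :=
  ∃ e : α → β, InjOn e M.E ∧ e '' M.E = N.E ∧ ∀ I ⊆ M.E, (M.Indep I ↔ N.Indep (e '' I))

/-- Representability of a matroid over a field `F`. -/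
def Representable (M : Matroid α) (F : Type) [Field F] : Prop :=
  ∃ (W : Type) (_ : AddCommGroup W) (_ : Module F W) (φ : α → W),
    ∀ I ⊆ M.E, (M.Indep I ↔ InjOn φ I ∧ LinearIndependent F (fun e : I => φ e))

/-- A rank-`r` matroid is sparse paving if every `r`-element subset of the ground set is
either a base or a circuit-hyperplane. -/
def SparsePaving (M : Matroid α) : Prop :=
  ∀ S ⊆ M.E, S.ncard = rank M → (M.IsBase S ∨ CircuitHyperplane M S)

/-- A perfect collection of circuits. -/
def Perfect (M : Matroid α) (Cs : Set (Set α)) : Prop :=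
  Cs.Finite ∧ (∀ C ∈ Cs, Circuit M C) ∧
  (⋃₀ Cs).ncard = rk M (⋃₀ Cs) + Cs.ncard ∧
  ∀ C ∈ Cs, ¬ C ⊆ ⋃₀ (Cs \ {C})

/-- A linear class of circuits. -/
def LinearClass (M : Matroid α) (𝒞 : Set (Set α)) : Prop :=
  (∀ C ∈ 𝒞, Circuit M C) ∧
  ∀ C₁ ∈ 𝒞, ∀ C₂ ∈ 𝒞, (C₁ ∪ C₂).ncard = rk M (C₁ ∪ C₂) + 2 →
    ∀ C, Circuit M C → C ⊆ C₁ ∪ C₂ → C ∈ 𝒞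

/-- The circulant sets `C_i ⊆ [2t]` from the construction of `K(r,t)`. -/
def Ci (r t i : ℕ) : Set ℕ :=
  (fun k => (k + 2 * (i - 1) - 1) % (2 * t) + 1) '' (Set.Icc 1 (r - 2))

/-- The family `𝒞'(r,t)`. -/
def CC' (r t : ℕ) : Set (Set ℕ) :=
  (fun i => Ci r t i ∪ {2 * t + 1, 2 * t + 2}) '' (Set.Icc 1 t)

/-- The family `𝒞''(r,t)`. -/
def CC'' (r t : ℕ) : Set (Set ℕ) :=
  (fun i => Ci r t i ∪ Ci r t (i + 1)) '' (Set.Icc 1 (t - 1))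

/-- `K` is the matroid `K(r,t)`: a rank-`r` matroid on `[2t+2]` in which every `r`-element
subset is a base or a circuit-hyperplane, whose circuit-hyperplanes are exactly the members
of `𝒞'(r,t) ∪ 𝒞''(r,t)`. -/
def IsKrt (r t : ℕ) (K : Matroid ℕ) : Prop :=
  K.E = Set.Icc 1 (2 * t + 2) ∧ rank K = r ∧
  (∀ S ⊆ K.E, S.ncard = r → (K.IsBase S ∨ CircuitHyperplane K S)) ∧
  (∀ S, CircuitHyperplane K S ↔ S ∈ CC' r t ∪ CC'' r t)

/-- A group partition: a partition of the non-identity elements such that each part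
together with the identity is a subgroup. -/
def GroupPartition (Γ : Type) [Group Γ] (𝒜 : Set (Set Γ)) : Prop :=
  (∀ A ∈ 𝒜, A.Nonempty) ∧ (⋃₀ 𝒜 = {(1 : Γ)}ᶜ) ∧
  (∀ A ∈ 𝒜, ∀ B ∈ 𝒜, A ≠ B → Disjoint A B) ∧
  (∀ A ∈ 𝒜, ∃ H : Subgroup Γ, (H : Set Γ) = insert 1 A)


end PaperLift

open Module Submodule

section LinearAlgebra

variable {ι : Type*} {F : Type*} [Field F] {W : Type*} [AddCommGroup W] [Module F W]
  {v : ι → W} {s t : Set ι}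

lemma LinearIndepOn.finrank_span_image (hs : LinearIndepOn F v s) (hfin : s.Finite) :
    finrank F (span F (v '' s)) = s.ncard := by
  have := hfin.fintype
  rw [image_eq_range, finrank_span_eq_card hs, ← Nat.card_eq_fintype_card, Nat.card_coe_set_eq]

lemma LinearIndepOn.exists_insert_of_ncard_lt (hs : LinearIndepOn F v s) (ht : LinearIndepOn F v t)
    (hsfin : s.Finite) (htfin : t.Finite) (hlt : s.ncard < t.ncard) :
    ∃ a ∈ t, a ∉ s ∧ LinearIndepOn F v (insert a s) := by
  by_contra! h
  have hle : span F (v '' t) ≤ span F (v '' s) := by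
    refine span_le.2 (image_subset_iff.2 fun a ha => ?_)
    exact hs.mem_span_iff.2 fun hins => by_contra fun has => h a ha has hins
  have := FiniteDimensional.span_of_finite F (hsfin.image v)
  have := Submodule.finrank_mono hle
  rw [hs.finrank_span_image hsfin, ht.finrank_span_image htfin] at this
  omega

lemma finrank_map_add_finrank_inf_ker {W' : Type*} [AddCommGroup W'] [Module F W']
    (g : W →ₗ[F] W') (V : Submodule F W) [FiniteDimensional F V] :
    finrank F (V.map g) + finrank F ↥(V ⊓ LinearMap.ker g) = finrank F V := by
  have h := LinearMap.finrank_range_add_finrank_ker (g.domRestrict V)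
  rw [LinearMap.range_domRestrict, LinearMap.ker_domRestrict] at h
  have hV : comap V.subtype (LinearMap.ker g) = comap V.subtype (V ⊓ LinearMap.ker g) := by
    ext x; simp
  rwa [hV, (comapSubtypeEquivOfLe (inf_le_left : V ⊓ LinearMap.ker g ≤ V)).finrank_eq] at h

lemma finrank_span_image_add_finrank_supported_inf_ker (v : ι → W) (hs : s.Finite) :
    finrank F (span F (v '' s)) +
      finrank F ↥(Finsupp.supported F F s ⊓ LinearMap.ker (Finsupp.linearCombination F v)) =
      s.ncard := by
  have := hs.fintype
  have := Module.Finite.equiv (Finsupp.supportedEquivFinsupp (M := F) (R := F) s).symm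
  rw [Finsupp.span_image_eq_map_linearCombination, finrank_map_add_finrank_inf_ker,
    (Finsupp.supportedEquivFinsupp s).finrank_eq, finrank_finsupp_self, ← Nat.card_eq_fintype_card,
    Nat.card_coe_set_eq]

lemma map_linearCombination_supported_inf_ker_mkQ_comp (U : Submodule F W) (v : ι → W)
    (s : Set ι) :
    (Finsupp.supported F F s ⊓ LinearMap.ker (Finsupp.linearCombination F (U.mkQ ∘ v))).map
      (Finsupp.linearCombination F v) = span F (v '' s) ⊓ U := by
  have hker : LinearMap.ker (Finsupp.linearCombination F (U.mkQ ∘ v)) =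
      U.comap (Finsupp.linearCombination F v) := by
    ext l
    rw [LinearMap.mem_ker, mem_comap, ← Finsupp.apply_linearCombination, mkQ_apply,
      Quotient.mk_eq_zero]
  rw [hker, ← map_inf_eq_map_inf_comap, Finsupp.span_image_eq_map_linearCombination]

lemma Finsupp.support_sub_smul_ssubset {l m : ι →₀ F} {e : ι} (hm : m.support ⊆ l.support)
    (he : m e ≠ 0) : (l - (l e / m e) • m).support ⊂ l.support := by
  classical
  refine Finset.ssubset_iff_of_subset ?_ |>.2 ⟨e, hm (Finsupp.mem_support_iff.2 he), ?_⟩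
  · refine Finsupp.support_sub.trans (Finset.union_subset subset_rfl ?_)
    exact Finsupp.support_smul.trans hm
  · simp [he]

end LinearAlgebra

namespace PaperLift

variable {α : Type}

section Bridge

variable {M : Matroid α} {C I Z : Set α}

lemma circuit_iff_isCircuit : Circuit M C ↔ M.IsCircuit C :=
  isCircuit_iff_forall_ssubset.symm

lemma contract_eq_contract (M : Matroid α) (X : Set α) : contract M X = M ／ X := rfl

lemma delete_eq_delete (M : Matroid α) (X : Set α) : delete M X = M ＼ X := rfl

lemma rk_eq_ncard_of_isBasis' (hI : M.IsBasis' I Z) (hZ : Z.Finite) : rk M Z = I.ncard := by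
  refine IsGreatest.csSup_eq ⟨⟨I, hI.indep, hI.subset, rfl⟩, ?_⟩
  rintro _ ⟨J, hJ, hJZ, rfl⟩
  refine ENat.toNat_le_toNat ?_ (hZ.subset hI.subset).encard_lt_top.ne
  rw [hI.encard_eq_eRk]
  exact hJ.encard_le_eRk_of_subset hJZ

lemma ncard_eq_rk_add_one_of_isCircuit (hC : M.IsCircuit C) (hCfin : C.Finite) :
    C.ncard = rk M C + 1 := by
  obtain ⟨e, he⟩ := hC.nonempty
  rw [rk_eq_ncard_of_isBasis' (hC.sdiff_singleton_isBasis he).isBasis' hCfin,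
    ncard_sdiff_singleton_add_one he hCfin]

end Bridge

section Representation

variable {F : Type} [Field F] {W : Type} [AddCommGroup W] [Module F W]
  {M : Matroid α} {φ : α → W} {I X Z : Set α} {e : α}

variable (F) in
def IsLinearRep (M : Matroid α) (φ : α → W) : Prop :=
  ∀ I ⊆ M.E, M.Indep I ↔ LinearIndepOn F φ I

lemma representable_iff : Representable M F ↔
    ∃ (W : Type) (_ : AddCommGroup W) (_ : Module F W) (φ : α → W), IsLinearRep F M φ := by
  refine exists_congr fun W => exists_congr fun _ => exists_congr fun _ =>
    exists_congr fun φ => forall₂_congr fun I _ => ?_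
  exact iff_congr Iff.rfl ⟨fun h => h.2, fun h => ⟨h.injOn, h⟩⟩

lemma IsLinearRep.delete (h : IsLinearRep F M φ) (D : Set α) : IsLinearRep F (M ＼ D) φ := by
  intro I hI
  rw [delete_ground] at hI
  rw [delete_indep_iff, and_iff_left (subset_sdiff.1 hI).2, h I (hI.trans sdiff_subset)]

lemma IsLinearRep.span_image_eq_of_isBasis' (h : IsLinearRep F M φ) (hI : M.IsBasis' I Z)
    (hZ : Z ⊆ M.E) : span F (φ '' I) = span F (φ '' Z) := by
  refine le_antisymm (span_mono (image_mono hI.subset)) (span_le.2 (image_subset_iff.2 ?_))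
  intro e he
  refine ((h I hI.indep.subset_ground).1 hI.indep).mem_span_iff.2 fun hins => ?_
  by_contra heI
  exact hI.insert_not_indep ⟨he, heI⟩ ((h _ (insert_subset (hZ he) hI.indep.subset_ground)).2 hins)

lemma IsLinearRep.rk_eq_finrank (h : IsLinearRep F M φ) (hZ : Z ⊆ M.E) (hZfin : Z.Finite) :
    rk M Z = finrank F (span F (φ '' Z)) := by
  obtain ⟨I, hI⟩ := M.exists_isBasis' Z
  rw [rk_eq_ncard_of_isBasis' hI hZfin, ← h.span_image_eq_of_isBasis' hI hZ,
    ((h I hI.indep.subset_ground).1 hI.indep).finrank_span_image (hZfin.subset hI.subset)]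

lemma IsLinearRep.mem_closure_of_mem_span (h : IsLinearRep F M φ) (he : e ∈ M.E) (hZ : Z ⊆ M.E)
    (hspan : φ e ∈ span F (φ '' Z)) : e ∈ M.closure Z := by
  obtain ⟨I, hI⟩ := M.exists_isBasis' Z
  rw [← hI.closure_eq_closure, hI.indep.mem_closure_iff']
  refine ⟨he, fun hins => ((h I hI.indep.subset_ground).1 hI.indep).mem_span_iff.1 ?_
    ((h _ (insert_subset he hI.indep.subset_ground)).1 hins)⟩
  rwa [h.span_image_eq_of_isBasis' hI hZ]

lemma IsLinearRep.contract (h : IsLinearRep F M φ) (hX : X ⊆ M.E) :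
    IsLinearRep F (M ／ X) ((span F (φ '' X)).mkQ ∘ φ) := by
  obtain ⟨I, hI⟩ := M.exists_isBasis' X
  intro J hJ
  rw [contract_ground, subset_sdiff] at hJ
  rw [hI.contract_indep_iff, ← h.span_image_eq_of_isBasis' hI hX,
    ((h I hI.indep.subset_ground).1 hI.indep).quotient_iff_union (hJ.2.symm.mono_left hI.subset),
    and_iff_left hJ.2.symm, union_comm, h _ (union_subset hI.indep.subset_ground hJ.1)]

lemma exists_isLinearRep_of_finite (φ : α → W) {S : Set α} (hS : S.Finite) :
    ∃ M : Matroid α, M.E = S ∧ IsLinearRep F M φ := by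
  refine ⟨(IndepMatroid.ofFinite hS (fun I => I ⊆ S ∧ LinearIndepOn F φ I)
    ⟨empty_subset S, linearIndepOn_empty F φ⟩ (fun I J hJ hIJ => ⟨hIJ.trans hJ.1, hJ.2.mono hIJ⟩)
    (fun I J hI hJ hlt => ?_) (fun I hI => hI.1)).matroid, rfl, fun I hI => ?_⟩
  · obtain ⟨e, heJ, heI, hins⟩ :=
      hI.2.exists_insert_of_ncard_lt hJ.2 (hS.subset hI.1) (hS.subset hJ.1) hlt
    exact ⟨e, heJ, heI, insert_subset (hJ.1 heJ) hI.1, hins⟩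
  · simp only [IndepMatroid.matroid_indep_iff, IndepMatroid.ofFinite_indep]
    exact and_iff_right hI

def IsCircuitRelations (M : Matroid α) (φ : α → W) (c : Set α → α →₀ F) : Prop :=
  ∀ C, M.IsCircuit C → ((c C).support : Set α) = C ∧ Finsupp.linearCombination F φ (c C) = 0

lemma IsLinearRep.exists_isCircuitRelations (h : IsLinearRep F M φ) :
    ∃ c : Set α → α →₀ F, IsCircuitRelations M φ c := by
  suffices ∀ C, M.IsCircuit C →
      ∃ l : α →₀ F, (l.support : Set α) = C ∧ Finsupp.linearCombination F φ l = 0 by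
    choose! c hc using this
    exact ⟨c, hc⟩
  intro C hC
  have hdep : ¬ LinearIndepOn F φ C := fun hli => hC.not_indep ((h C hC.subset_ground).2 hli)
  rw [linearIndepOn_iff] at hdep
  push Not at hdep
  obtain ⟨l, hlC, hl0, hl⟩ := hdep
  have hsupp : (l.support : Set α) ⊆ C := (Finsupp.mem_supported F l).1 hlC
  refine ⟨l, hC.eq_of_not_indep_subset (fun hind => hl ?_) hsupp, hl0⟩
  exact linearIndepOn_iff.1 ((h _ (hsupp.trans hC.subset_ground)).1 hind) l
    ((Finsupp.mem_supported F l).2 subset_rfl) hl0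

end Representation

section CircuitRelations

variable {F : Type} [Field F] {W : Type} [AddCommGroup W] [Module F W]
  {M : Matroid α} {φ : α → W} {c : Set α → α →₀ F} {C C₁ C₂ Y : Set α}

lemma IsLinearRep.span_circuitRelations_eq (h : IsLinearRep F M φ)
    (hc : IsCircuitRelations M φ c) (hY : Y ⊆ M.E) :
    span F (c '' {C | M.IsCircuit C ∧ C ⊆ Y}) =
      Finsupp.supported F F Y ⊓ LinearMap.ker (Finsupp.linearCombination F φ) := by
  refine le_antisymm (span_le.2 ?_) fun l hl => ?_
  · rintro _ ⟨C, ⟨hC, hCY⟩, rfl⟩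
    exact ⟨(Finsupp.mem_supported F _).2 ((hc C hC).1.symm ▸ hCY), (hc C hC).2⟩
  induction hn : l.support.card using Nat.strong_induction_on generalizing l with
  | _ n ih =>
  obtain ⟨hlY, hl0⟩ := mem_inf.1 hl
  rw [Finsupp.mem_supported] at hlY
  obtain rfl | hl := eq_or_ne l 0
  · exact zero_mem _
  have hdep : M.Dep l.support := ⟨fun hind => hl (linearIndepOn_iff.1
    ((h _ (hlY.trans hY)).1 hind) l ((Finsupp.mem_supported F l).2 subset_rfl) hl0), hlY.trans hY⟩
  obtain ⟨C, hCl, hC⟩ := hdep.exists_isCircuit_subset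
  obtain ⟨e, he⟩ := hC.nonempty
  have hce : c C e ≠ 0 :=
    Finsupp.mem_support_iff.1 (by rw [← Finset.mem_coe, (hc C hC).1]; exact he)
  have hsupp : (c C).support ⊆ l.support := by
    rw [← Finset.coe_subset, (hc C hC).1]; exact hCl
  have hlt := Finsupp.support_sub_smul_ssubset hsupp hce
  rw [← sub_add_cancel l ((l e / c C e) • c C)]
  refine add_mem (ih _ (hn ▸ Finset.card_lt_card hlt) _ (mem_inf.2 ⟨?_, ?_⟩) rfl)
    (smul_mem _ _ (subset_span ⟨C, ⟨hC, hCl.trans hlY⟩, rfl⟩))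
  · exact (Finsupp.mem_supported F _).2 ((Finset.coe_subset.2 hlt.subset).trans hlY)
  · simp [LinearMap.mem_ker.1 hl0, (hc C hC).2]

lemma IsLinearRep.mem_span_pair_of_ncard_eq_rk_add_two (h : IsLinearRep F M φ)
    (hc : IsCircuitRelations M φ c) (hC₁ : M.IsCircuit C₁) (hC₂ : M.IsCircuit C₂)
    (hnull : (C₁ ∪ C₂).ncard = rk M (C₁ ∪ C₂) + 2) (hC : M.IsCircuit C) (hCY : C ⊆ C₁ ∪ C₂) :
    c C ∈ span F (c '' {C₁, C₂}) := by
  have hYE : C₁ ∪ C₂ ⊆ M.E := union_subset hC₁.subset_ground hC₂.subset_ground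
  have hYfin : (C₁ ∪ C₂).Finite := finite_of_ncard_ne_zero (by omega)
  have hrel := h.span_circuitRelations_eq hc hYE
  have hdim : finrank F ↥(Finsupp.supported F F (C₁ ∪ C₂) ⊓
      LinearMap.ker (Finsupp.linearCombination F φ)) = 2 := by
    have := finrank_span_image_add_finrank_supported_inf_ker φ hYfin (F := F)
    rw [← h.rk_eq_finrank hYE hYfin] at this
    omega
  have hne : C₁ ≠ C₂ := by
    rintro rfl
    have := ncard_eq_rk_add_one_of_isCircuit hC₁ (hYfin.subset subset_union_left)
    rw [union_self] at hnull
    omega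
  have hli : LinearIndepOn F c {C₁, C₂} := by
    refine (linearIndepOn_pair_iff c hne ?_).2 fun a ha =>
      hne (hC₂.eq_of_subset_isCircuit hC₁ ?_).symm
    · rw [Ne, ← Finsupp.support_eq_empty, ← Finset.coe_eq_empty, (hc C₁ hC₁).1]
      exact hC₁.nonempty.ne_empty
    · rw [← (hc C₁ hC₁).1, ← (hc C₂ hC₂).1, ← ha, Finset.coe_subset]
      exact Finsupp.support_smul
  have : FiniteDimensional F ↥(Finsupp.supported F F (C₁ ∪ C₂) ⊓
      LinearMap.ker (Finsupp.linearCombination F φ)) := FiniteDimensional.of_finrank_pos (by omega)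
  have hspan : span F (c '' {C₁, C₂}) = Finsupp.supported F F (C₁ ∪ C₂) ⊓
      LinearMap.ker (Finsupp.linearCombination F φ) := by
    refine eq_of_le_of_finrank_eq (hrel ▸ span_mono (image_mono ?_)) ?_
    · rintro _ (rfl | rfl)
      exacts [⟨hC₁, subset_union_left⟩, ⟨hC₂, subset_union_right⟩]
    · rw [hli.finrank_span_image (toFinite _), ncard_pair hne, hdim]
  rw [hspan, ← hrel]
  exact subset_span ⟨C, ⟨hC, hCY⟩, rfl⟩

lemma IsLinearRep.mem_closure_pair_of_ncard_eq_rk_add_two (h : IsLinearRep F M φ)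
    (hc : IsCircuitRelations M φ c) {W' : Type} [AddCommGroup W'] [Module F W']
    (g : (α →₀ F) →ₗ[F] W') {N : Matroid (Set α)} (hN : IsLinearRep F N (g ∘ c))
    (hNE : N.E = {C | M.IsCircuit C}) (hC₁ : M.IsCircuit C₁) (hC₂ : M.IsCircuit C₂)
    (hnull : (C₁ ∪ C₂).ncard = rk M (C₁ ∪ C₂) + 2) (hC : M.IsCircuit C) (hCY : C ⊆ C₁ ∪ C₂) :
    C ∈ N.closure {C₁, C₂} := by
  refine hN.mem_closure_of_mem_span (hNE ▸ hC) (pair_subset (hNE ▸ hC₁) (hNE ▸ hC₂)) ?_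
  rw [image_comp, ← map_span]
  exact mem_map_of_mem (h.mem_span_pair_of_ncard_eq_rk_add_two hc hC₁ hC₂ hnull hC hCY)

lemma IsLinearRep.rk_delete_eq_rk_contract_add {X : Set α} (h : IsLinearRep F M φ)
    (hX : X ⊆ M.E) (hc : IsCircuitRelations (M ／ X) ((span F (φ '' X)).mkQ ∘ φ) c)
    {N : Matroid (Set α)} (hN : IsLinearRep F N (Finsupp.linearCombination F φ ∘ c))
    (hNE : N.E = {C | (M ／ X).IsCircuit C}) (hY : Y ⊆ M.E \ X) (hYfin : Y.Finite) :
    rk (M ＼ X) Y = rk (M ／ X) Y + rk N {C | (M ／ X).IsCircuit C ∧ C ⊆ Y} := by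
  have hf := h.contract hX
  have := FiniteDimensional.span_of_finite F (hYfin.image φ)
  rw [(h.delete X).rk_eq_finrank hY hYfin, hf.rk_eq_finrank hY hYfin,
    hN.rk_eq_finrank (fun C hC => hNE ▸ hC.1) (hYfin.finite_subsets.subset fun C hC => hC.2),
    image_comp (Finsupp.linearCombination F φ), ← map_span, hf.span_circuitRelations_eq hc hY,
    map_linearCombination_supported_inf_ker_mkQ_comp, image_comp, ← map_span,
    ← finrank_map_add_finrank_inf_ker (span F (φ '' X)).mkQ, ker_mkQ]

end CircuitRelations

/-- If `K` is an `F`-representable matroid and `X` is a subset of its ground set, then there is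
an `F`-representable matroid `N` on the circuits of `K/X` satisfying the lift condition for
`K/X` with `(K/X)^N = K ∖ X`. -/
theorem stmt2 {α : Type} (F : Type) [Field F] (K : Matroid α) (hK : K.E.Finite)
    (hrep : Representable K F) (X : Set α) (hX : X ⊆ K.E) :
    ∃ N : Matroid (Set α), Representable N F ∧ LiftCondition (contract K X) N ∧
      (∀ Y ⊆ (contract K X).E,
        rk (delete K X) Y =
          rk (contract K X) Y + rk N {C | Circuit (contract K X) C ∧ C ⊆ Y}) := by
  obtain ⟨W, _, _, φ, hφ⟩ := representable_iff.1 hrep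
  have hf := hφ.contract hX
  obtain ⟨c, hc⟩ := hf.exists_isCircuitRelations
  have hcirc : {C | (K ／ X).IsCircuit C}.Finite :=
    (hK.sdiff (t := X)).finite_subsets.subset fun C hC => hC.subset_ground
  obtain ⟨N, hNE, hN⟩ :=
    exists_isLinearRep_of_finite (F := F) (Finsupp.linearCombination F φ ∘ c) hcirc
  unfold LiftCondition
  simp only [contract_eq_contract, delete_eq_delete, circuit_iff_isCircuit]
  refine ⟨N, representable_iff.2 ⟨W, _, _, _, hN⟩, ⟨hNE, ?_⟩, fun Y hY => ?_⟩
  · exact fun C₁ C₂ hC₁ hC₂ hnull C hC hCY =>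
      hf.mem_closure_pair_of_ncard_eq_rk_add_two hc _ hN hNE hC₁ hC₂ hnull hC hCY
  · exact hφ.rk_delete_eq_rk_contract_add hX hc hN hNE hY ((hK.sdiff (t := X)).subset hY)

end PaperLift
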